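/- Let (y_k) be a deterministic sequence of reals whose empirical distributions converge weakly to a measure ν. If (w_k) is obtained from (y_k) by deleting a finite set of indices and permuting the remainder such that each w_n equals y_{σ(n)} for an injection σ with |σ(n) − n| uniformly bounded, then the empirical distributions of (w_k) also converge weakly to ν. -/

import Mathlib

/-!
The first `n` terms of `w` are the terms of `y` indexed by `σ '' [0, n)`. Bounded displacement
forces this set to differ from `[0, n)` only inside the windows `[n, n + B)` and `[n - B, n)`,
up to the finitely many indices missed by `σ`. So for bounded `f` the partial sums of `f ∘ w`
and `f ∘ y` differ by `O(1)`, which disappears after dividing by `n`.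
-/

open MeasureTheory Filter Finset Topology

section BoundedDisplacement

variable {σ : ℕ → ℕ} {B : ℕ}

theorem card_image_range_sdiff_range_le (hdisp : ∀ k, |(σ k : ℤ) - k| ≤ B) (n : ℕ) :
    #((range n).image σ \ range n) ≤ B :=
  calc #((range n).image σ \ range n) ≤ #(Ico n (n + B)) := card_le_card fun j hj => by
        simp only [Finset.mem_sdiff, Finset.mem_image, Finset.mem_range] at hj
        obtain ⟨⟨k, hk, rfl⟩, hkn⟩ := hj
        have := abs_le.mp (hdisp k)
        rw [mem_Ico]
        omega
    _ = B := by simp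

theorem card_range_sdiff_image_range_le {S : Finset ℕ} (hS : ∀ j ∉ S, j ∈ Set.range σ)
    (hdisp : ∀ k, |(σ k : ℤ) - k| ≤ B) (n : ℕ) :
    #(range n \ (range n).image σ) ≤ B + #S :=
  calc #(range n \ (range n).image σ) ≤ #(Ico (n - B) n ∪ S) := card_le_card fun j hj => by
        simp only [Finset.mem_sdiff, Finset.mem_image, Finset.mem_range, not_exists, not_and] at hj
        rw [mem_union, mem_Ico]
        by_cases hjS : j ∈ S
        · exact Or.inr hjS
        obtain ⟨k, rfl⟩ := hS _ hjS
        have hnk : n ≤ k := by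
          by_contra hkn
          exact hj.2 k (by omega) rfl
        have := abs_le.mp (hdisp k)
        omega
    _ ≤ #(Ico (n - B) n) + #S := card_union_le _ _
    _ ≤ B + #S := by simp; omega

theorem norm_sum_range_comp_sub_sum_range_le {E : Type*} [SeminormedAddCommGroup E]
    {f : ℕ → E} {C : ℝ} (hf : ∀ j, ‖f j‖ ≤ C) (hσ : σ.Injective) {S : Finset ℕ}
    (hS : ∀ j ∉ S, j ∈ Set.range σ) (hdisp : ∀ k, |(σ k : ℤ) - k| ≤ B) (n : ℕ) :
    ‖∑ k ∈ range n, f (σ k) - ∑ k ∈ range n, f k‖ ≤ (2 * B + #S) * C := by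
  have hC : 0 ≤ C := (norm_nonneg _).trans (hf 0)
  have norm_sum_le (s : Finset ℕ) : ‖∑ j ∈ s, f j‖ ≤ #s * C := by
    simpa using norm_sum_le_of_le s fun j _ => hf j
  rw [← sum_image fun a _ b _ h => hσ h, ← sum_sdiff_sub_sum_sdiff]
  calc _ ≤ ‖∑ j ∈ (range n).image σ \ range n, f j‖
          + ‖∑ j ∈ range n \ (range n).image σ, f j‖ := norm_sub_le _ _
    _ ≤ B * C + (B + #S) * C := by
        gcongr
        · exact (norm_sum_le _).trans <| by
            gcongr; exact_mod_cast card_image_range_sdiff_range_le hdisp n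
        · exact (norm_sum_le _).trans <| by
            gcongr; exact_mod_cast card_range_sdiff_image_range_le hS hdisp n
    _ = (2 * B + #S) * C := by ring

end BoundedDisplacement

theorem tendsto_div_natCast_of_abs_sub_le {u v : ℕ → ℝ} {L K : ℝ}
    (hu : Tendsto (fun n => u n / n) atTop (𝓝 L)) (huv : ∀ n, |v n - u n| ≤ K) :
    Tendsto (fun n => v n / n) atTop (𝓝 L) := by
  have hdiff : Tendsto (fun n : ℕ => (v n - u n) / n) atTop (𝓝 0) :=
    squeeze_zero_norm
      (fun n => by rw [Real.norm_eq_abs, abs_div, Nat.abs_cast]; gcongr; exact huv n)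
      (tendsto_const_div_atTop_nhds_zero_nat K)
  simpa [← add_div] using hu.add hdiff

theorem empirical_of_bounded_displacement_reordering_general
    (ν : Measure ℝ)
    (y w : ℕ → ℝ) (σ : ℕ → ℕ)
    (hσinj : Function.Injective σ)
    (hfin : (Set.range σ)ᶜ.Finite)
    (hw : ∀ n, w n = y (σ n))
    (B : ℕ) (hdisp : ∀ n, |(σ n : ℤ) - (n : ℤ)| ≤ B)
    (hy : ∀ f : BoundedContinuousFunction ℝ ℝ,
      Tendsto (fun n : ℕ => (∑ k ∈ Finset.range n, f (y k)) / n)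
        atTop (nhds (∫ x, f x ∂ν))) :
    ∀ f : BoundedContinuousFunction ℝ ℝ,
      Tendsto (fun n : ℕ => (∑ k ∈ Finset.range n, f (w k)) / n)
        atTop (nhds (∫ x, f x ∂ν)) := by
  intro f
  refine tendsto_div_natCast_of_abs_sub_le (K := (2 * B + #hfin.toFinset) * ‖f‖) (hy f)
    fun n => ?_
  simp only [hw]
  exact norm_sum_range_comp_sub_sum_range_le (f := fun j => f (y j))
    (fun j => f.norm_coe_le_norm _) hσinj (by simp) hdisp n

/-- If the empirical distributions of a deterministic real sequence `(y k)` converge weakly to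
`ν`, and `(w k)` is obtained from `(y k)` by deleting a finite set of indices and permuting the
remainder via an injection `σ` with uniformly bounded displacement (`|σ n − n| ≤ B`), then the
empirical distributions of `(w k)` also converge weakly to `ν`. -/
theorem empirical_of_bounded_displacement_reordering
    (ν : Measure ℝ) [IsProbabilityMeasure ν]
    (y w : ℕ → ℝ) (σ : ℕ → ℕ)
    (hσinj : Function.Injective σ)
    (hfin : (Set.range σ)ᶜ.Finite)
    (hw : ∀ n, w n = y (σ n))
    (B : ℕ) (hdisp : ∀ n, |(σ n : ℤ) - (n : ℤ)| ≤ B)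
    (hy : ∀ f : BoundedContinuousFunction ℝ ℝ,
      Tendsto (fun n : ℕ => (∑ k ∈ Finset.range n, f (y k)) / n)
        atTop (nhds (∫ x, f x ∂ν))) :
    ∀ f : BoundedContinuousFunction ℝ ℝ,
      Tendsto (fun n : ℕ => (∑ k ∈ Finset.range n, f (w k)) / n)
        atTop (nhds (∫ x, f x ∂ν)) :=
  empirical_of_bounded_displacement_reordering_general ν y w σ hσinj hfin hw B hdisp hy
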